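/- Suppose a kernel K_α on (ℝⁿ)^{m+1} satisfies the Dini-type smoothness condition |K_α(x, y⃗) − K_α(x', y⃗)| ≤ A (∑_{j=1}^m |x−y_j|)^{α−mn} ω(|x−x'| / ∑_{j=1}^m |x−y_j|) whenever |x−x'| ≤ (1/2) max_j |x−y_j|, where ω is non-decreasing. Then for each k ≥ 1 and 1 < p₀ < ∞, the generalized kernel condition holds with C_k = C·ω(2^{-k}): (∫_{Q(x, 2^{k+2}√(mn)|x−x'|)^m \ Q(x, 2^{k+1}√(mn)|x−x'|)^m} |K_α(x,y⃗) − K_α(x',y⃗)|^{p₀} dy⃗)^{1/p₀} ≤ C ω(2^{-k}) 2^{k(α − mn/p₀')} |x−x'|^{α − mn/p₀'}, with C depending only on m, n, α, p₀, A. -/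

import Mathlib

open MeasureTheory Set ENNReal NNReal

/-- The axis-parallel cube in Euclidean ℝⁿ with center `z` and side length `r`. -/
def cube (n : ℕ) (z : EuclideanSpace ℝ (Fin n)) (r : ℝ) : Set (EuclideanSpace ℝ (Fin n)) :=
  {x | ∀ i, |x i - z i| ≤ r / 2}

/-! A point `y` of the annulus has some `y j` at distance at least `R = 2ᵏ √(mn) |x - x'|`
from `x`, and `R ≥ 2 |x - x'|`. So the smoothness condition applies at `y`, and since
`∑ |x - y j| ≥ R` and `ω` is monotone, `|K x y - K x' y| ≤ A R^(α - mn) ω(2⁻ᵏ)`. The annulus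
lies in a product of `m` cubes of side `4R`, so the `L^p₀` norm over it is at most
`A R^(α - mn) ω(2⁻ᵏ) (4R)^(mn/p₀)`, which is the claimed bound because
`α - mn + mn/p₀ = α - mn/p₀'`. -/

local notation "E" n => EuclideanSpace ℝ (Fin n)

section Cube

variable {n : ℕ}

theorem cube_eq_preimage_pi_Icc (z : E n) (r : ℝ) :
    cube n z r = WithLp.ofLp ⁻¹' univ.pi fun i => Icc (z i - r / 2) (z i + r / 2) := by
  ext x
  simp only [cube, mem_ofPred_eq, mem_preimage, mem_univ_pi, mem_Icc, abs_le]
  exact forall_congr' fun i => by constructor <;> intro h <;> constructor <;> linarith [h.1, h.2]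

theorem volume_cube (z : E n) (r : ℝ) : volume (cube n z r) = ENNReal.ofReal r ^ n := by
  rw [cube_eq_preimage_pi_Icc, (PiLp.volume_preserving_ofLp (Fin n)).measure_preimage
    (MeasurableSet.univ_pi fun _ => measurableSet_Icc).nullMeasurableSet, volume_pi_pi]
  simp [show ∀ i, z i + r / 2 - (z i - r / 2) = r from fun _ => by ring]

theorem volume_setOf_forall_mem_cube {ι : Type*} [Fintype ι] (z : E n) (r : ℝ) :
    volume {y : ι → E n | ∀ j, y j ∈ cube n z r} = ENNReal.ofReal r ^ (n * Fintype.card ι) := by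
  have : {y : ι → E n | ∀ j, y j ∈ cube n z r} = univ.pi fun _ => cube n z r := by ext; simp
  rw [this, volume_pi_pi]
  simp [volume_cube, pow_mul]

theorem mem_cube_of_dist_le {z x : E n} {r : ℝ} (h : dist z x ≤ r / 2) : x ∈ cube n z r :=
  fun i => (PiLp.dist_apply_le x z i).trans (dist_comm x z ▸ h)

theorem exists_lt_dist_of_not_forall_mem_cube {ι : Type*} {z : E n} {r : ℝ} {y : ι → E n}
    (hy : y ∉ {y : ι → E n | ∀ j, y j ∈ cube n z r}) : ∃ j, r / 2 < dist z (y j) := by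
  by_contra! h
  exact hy fun j => mem_cube_of_dist_le (h j)

end Cube

theorem setLIntegral_ofReal_rpow_le {X : Type*} [MeasurableSpace X] {μ : Measure X} {s : Set X}
    {f : X → ℝ} {p B : ℝ} (hp : 0 < p) (hB : 0 ≤ B) (hf : ∀ y ∈ s, |f y| ≤ B) :
    (∫⁻ y in s, ENNReal.ofReal (|f y| ^ p) ∂μ) ^ (1 / p) ≤ ENNReal.ofReal B * μ s ^ (1 / p) := by
  have hint : ∫⁻ y in s, ENNReal.ofReal (|f y| ^ p) ∂μ ≤ ENNReal.ofReal (B ^ p) * μ s :=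
    (setLIntegral_mono measurable_const fun y hy =>
      ENNReal.ofReal_le_ofReal (Real.rpow_le_rpow (abs_nonneg _) (hf y hy) hp.le)).trans_eq
      (setLIntegral_const s _)
  calc _ ≤ (ENNReal.ofReal (B ^ p) * μ s) ^ (1 / p) := by gcongr
    _ = ENNReal.ofReal B * μ s ^ (1 / p) := by
      rw [ENNReal.mul_rpow_of_nonneg _ _ (by positivity), ENNReal.ofReal_rpow_of_nonneg
        (by positivity) (by positivity), ← Real.rpow_mul hB, mul_one_div_cancel hp.ne',
        Real.rpow_one]

def IsDiniKernel {n m : ℕ} (hm : 0 < m) (α A : ℝ) (ω : ℝ → ℝ)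
    (K : (E n) → (Fin m → E n) → ℝ) : Prop :=
  ∀ (x x' : E n) (y : Fin m → E n),
    dist x x' ≤ (1/2) *
      (Finset.univ.sup' (Finset.univ_nonempty_iff.mpr (Fin.pos_iff_nonempty.mp hm))
        fun j => dist x (y j)) →
    |K x y - K x' y| ≤ A * (∑ j, dist x (y j)) ^ (α - m * n) *
      ω (dist x x' / ∑ j, dist x (y j))

theorem IsDiniKernel.abs_sub_le {n m : ℕ} {hm : 0 < m} {α A : ℝ} {ω : ℝ → ℝ}
    {K : (E n) → (Fin m → E n) → ℝ} (hK : IsDiniKernel hm α A ω K) (hαmn : α ≤ m * n)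
    (hA : 0 ≤ A) (hωmono : MonotoneOn ω (Ici 0)) (hωnn : ∀ t, 0 ≤ t → 0 ≤ ω t)
    {k : ℕ} (hk : 1 ≤ k) {x x' : E n} {y : Fin m → E n} {R : ℝ} (hR : 0 < R)
    (hxx'R : 2 ^ k * dist x x' ≤ R) {j : Fin m} (hRj : R ≤ dist x (y j)) :
    |K x y - K x' y| ≤ A * R ^ (α - m * n) * ω (2 ^ (-(k : ℝ))) := by
  set S := ∑ j, dist x (y j)
  have hRS : R ≤ S := hRj.trans (Finset.single_le_sum (fun _ _ => dist_nonneg) (Finset.mem_univ j))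
  have hS : 0 < S := hR.trans_le hRS
  have h2k : (2 : ℝ) ≤ 2 ^ k := by simpa using pow_le_pow_right₀ one_le_two hk
  have hnear : dist x x' ≤ (1/2) *
      (Finset.univ.sup' (Finset.univ_nonempty_iff.mpr (Fin.pos_iff_nonempty.mp hm))
        fun j => dist x (y j)) := by
    have := Finset.le_sup' (fun j => dist x (y j)) (Finset.mem_univ j)
    nlinarith [dist_nonneg (x := x) (y := x')]
  have hratio_nonneg : 0 ≤ dist x x' / S := div_nonneg dist_nonneg hS.le
  have hratio : dist x x' / S ≤ 2 ^ (-(k : ℝ)) := by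
    rw [Real.rpow_neg zero_le_two, Real.rpow_natCast, div_le_iff₀ hS,
      le_inv_mul_iff₀ (pow_pos two_pos k : (0 : ℝ) < 2 ^ k)]
    linarith
  calc |K x y - K x' y| ≤ A * S ^ (α - m * n) * ω (dist x x' / S) := hK x x' y hnear
    _ ≤ A * R ^ (α - m * n) * ω (2 ^ (-(k : ℝ))) := by
      have hSR : S ^ (α - m * n) ≤ R ^ (α - m * n) :=
        Real.rpow_le_rpow_of_nonpos hR hRS (by linarith)
      have hω : ω (dist x x' / S) ≤ ω (2 ^ (-(k : ℝ))) :=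
        hωmono hratio_nonneg (Real.rpow_nonneg zero_le_two _) hratio
      exact mul_le_mul (mul_le_mul_of_nonneg_left hSR hA) hω (hωnn _ hratio_nonneg)
        (mul_nonneg hA (Real.rpow_nonneg hR.le _))

theorem div_div_sub_one_eq_sub_div (N : ℝ) {p : ℝ} (hp : p ≠ 0) :
    N / (p / (p - 1)) = N - N / p := by
  rw [div_div_eq_mul_div]
  field_simp

theorem rpow_sub_mul_rpow_div_eq {s d : ℝ} (hs : 0 < s) (hd : 0 < d) (k : ℕ) (α N : ℝ)
    {p : ℝ} (hp : p ≠ 0) :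
    (2 ^ k * s * d) ^ (α - N) * (2 ^ (k + 2) * s * d) ^ (N / p) =
      s ^ (α - N / (p / (p - 1))) * 4 ^ (N / p) * 2 ^ ((k : ℝ) * (α - N / (p / (p - 1)))) *
        d ^ (α - N / (p / (p - 1))) := by
  set R := 2 ^ k * s * d
  have hR : 0 < R := by positivity
  rw [div_div_sub_one_eq_sub_div N hp]
  calc R ^ (α - N) * (2 ^ (k + 2) * s * d) ^ (N / p)
      = 4 ^ (N / p) * R ^ (α - (N - N / p)) := by
        rw [show (2 : ℝ) ^ (k + 2) * s * d = 4 * R by ring, Real.mul_rpow zero_le_four hR.le,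
          show α - (N - N / p) = α - N + N / p by ring, Real.rpow_add hR]
        ring
    _ = _ := by
        rw [Real.mul_rpow (by positivity) hd.le, Real.mul_rpow (by positivity) hs.le,
          Real.rpow_natCast_mul zero_le_two]
        ring

theorem dini_kernel_implies_generalized_kernel_general
    (n m : ℕ) (hn : 0 < n) (hm : 0 < m) (α A p₀ : ℝ)
    (hαmn : α < m * n) (hA : 0 < A) (hp₀ : 1 < p₀)
    (ω : ℝ → ℝ) (hωmono : MonotoneOn ω (Ici 0)) (hωnn : ∀ t, 0 ≤ t → 0 ≤ ω t)
    (K : EuclideanSpace ℝ (Fin n) → (Fin m → EuclideanSpace ℝ (Fin n)) → ℝ)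
    (hK : ∀ (x x' : EuclideanSpace ℝ (Fin n)) (y : Fin m → EuclideanSpace ℝ (Fin n)),
      dist x x' ≤ (1/2) *
        (Finset.univ.sup' (Finset.univ_nonempty_iff.mpr (Fin.pos_iff_nonempty.mp hm))
          fun j => dist x (y j)) →
      |K x y - K x' y| ≤ A * (∑ j, dist x (y j)) ^ (α - m * n) *
        ω (dist x x' / ∑ j, dist x (y j))) :
    ∃ C : ℝ, 0 < C ∧ ∀ k : ℕ, 1 ≤ k →
      ∀ x x' : EuclideanSpace ℝ (Fin n), x ≠ x' →
        (∫⁻ y in {y : Fin m → EuclideanSpace ℝ (Fin n) |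
              ∀ j, y j ∈ cube n x (2 ^ (k+2) * Real.sqrt (m*n) * dist x x')} \
            {y : Fin m → EuclideanSpace ℝ (Fin n) |
              ∀ j, y j ∈ cube n x (2 ^ (k+1) * Real.sqrt (m*n) * dist x x')},
            ENNReal.ofReal (|K x y - K x' y| ^ p₀)) ^ (1/p₀) ≤
          ENNReal.ofReal (C * ω (2 ^ (-(k:ℝ))) *
            2 ^ ((k:ℝ) * (α - m * n / (p₀ / (p₀ - 1)))) *
            dist x x' ^ (α - m * n / (p₀ / (p₀ - 1)))) := by
  have hp₀pos : 0 < p₀ := zero_lt_one.trans hp₀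
  set s := Real.sqrt (m * n)
  have hs : 1 ≤ s := Real.one_le_sqrt.2 (by norm_cast; exact Nat.mul_pos hm hn)
  refine ⟨A * s ^ (α - m * n / (p₀ / (p₀ - 1))) * 4 ^ (m * n / p₀), by positivity,
    fun k hk x x' hxx' => ?_⟩
  set d := dist x x'
  have hd : 0 < d := dist_pos.2 hxx'
  set R := 2 ^ k * s * d
  have hR : 0 < R := by positivity
  set B := A * R ^ (α - m * n) * ω (2 ^ (-(k:ℝ)))
  have hB : 0 ≤ B :=
    mul_nonneg (by positivity) (hωnn _ (Real.rpow_nonneg zero_le_two _))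
  have hbound : ∀ y ∈ {y : Fin m → E n | ∀ j, y j ∈ cube n x (2 ^ (k+2) * s * d)} \
      {y | ∀ j, y j ∈ cube n x (2 ^ (k+1) * s * d)}, |K x y - K x' y| ≤ B := by
    rintro y ⟨-, hy⟩
    obtain ⟨j, hj⟩ := exists_lt_dist_of_not_forall_mem_cube hy
    have hRj : R ≤ dist x (y j) := by
      linarith [show (2 : ℝ) ^ (k + 1) * s * d / 2 = R by ring]
    exact IsDiniKernel.abs_sub_le (hm := hm) hK hαmn.le hA.le hωmono hωnn hk hR
      (by nlinarith [pow_pos (two_pos : (0 : ℝ) < 2) k]) hRj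
  calc _ ≤ ENNReal.ofReal B *
        volume {y : Fin m → E n | ∀ j, y j ∈ cube n x (2 ^ (k+2) * s * d)} ^ (1 / p₀) :=
        (setLIntegral_ofReal_rpow_le hp₀pos hB hbound).trans (by gcongr; exact sdiff_subset)
    _ = ENNReal.ofReal (B * (2 ^ (k+2) * s * d) ^ (m * n / p₀)) := by
      rw [volume_setOf_forall_mem_cube, Fintype.card_fin, ← ENNReal.ofReal_pow (by positivity),
        ENNReal.ofReal_rpow_of_nonneg (by positivity) (by positivity), ← ENNReal.ofReal_mul hB,
        ← Real.rpow_natCast_mul (by positivity)]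
      rw [show ((n * m : ℕ) : ℝ) * (1 / p₀) = m * n / p₀ by push_cast; ring]
    _ = _ := by
      congr 1
      linear_combination (A * ω (2 ^ (-(k:ℝ)))) *
        rpow_sub_mul_rpow_div_eq (zero_lt_one.trans_le hs) hd k α (m * n) hp₀pos.ne'

/-- The Dini-type smoothness condition (1.2) implies the generalized kernel
condition (1.5) with C_k = C ω(2^{-k}). -/
theorem dini_kernel_implies_generalized_kernel
    (n m : ℕ) (hn : 0 < n) (hm : 0 < m) (α A p₀ : ℝ)
    (hα : 0 < α) (hαmn : α < m * n) (hA : 0 < A) (hp₀ : 1 < p₀)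
    (ω : ℝ → ℝ) (hωmono : MonotoneOn ω (Ici 0)) (hωnn : ∀ t, 0 ≤ t → 0 ≤ ω t)
    (K : EuclideanSpace ℝ (Fin n) → (Fin m → EuclideanSpace ℝ (Fin n)) → ℝ)
    (hK : ∀ (x x' : EuclideanSpace ℝ (Fin n)) (y : Fin m → EuclideanSpace ℝ (Fin n)),
      dist x x' ≤ (1/2) *
        (Finset.univ.sup' (Finset.univ_nonempty_iff.mpr (Fin.pos_iff_nonempty.mp hm))
          fun j => dist x (y j)) →
      |K x y - K x' y| ≤ A * (∑ j, dist x (y j)) ^ (α - m * n) *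
        ω (dist x x' / ∑ j, dist x (y j))) :
    ∃ C : ℝ, 0 < C ∧ ∀ k : ℕ, 1 ≤ k →
      ∀ x x' : EuclideanSpace ℝ (Fin n), x ≠ x' →
        (∫⁻ y in {y : Fin m → EuclideanSpace ℝ (Fin n) |
              ∀ j, y j ∈ cube n x (2 ^ (k+2) * Real.sqrt (m*n) * dist x x')} \
            {y : Fin m → EuclideanSpace ℝ (Fin n) |
              ∀ j, y j ∈ cube n x (2 ^ (k+1) * Real.sqrt (m*n) * dist x x')},
            ENNReal.ofReal (|K x y - K x' y| ^ p₀)) ^ (1/p₀) ≤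
          ENNReal.ofReal (C * ω (2 ^ (-(k:ℝ))) *
            2 ^ ((k:ℝ) * (α - m * n / (p₀ / (p₀ - 1)))) *
            dist x x' ^ (α - m * n / (p₀ / (p₀ - 1)))) :=
  dini_kernel_implies_generalized_kernel_general n m hn hm α A p₀ hαmn hA hp₀ ω hωmono hωnn K hK
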